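/- arXiv:0911.2233 — 5 statements merged into one kernel-verified Lean document; each statement's English description precedes it below -/
import Mathlib

section
/- Let θ be an antimorphic involution over Σ and let Σ' ⊆ Idt(θ) ∪ Trn(θ). If an infinite word w over Σ' is abelian-kth-power-free, then w is pseudo-kth-power-free with respect to θ. -/
/-!
An antimorphism `θ` is determined by its action `f` on letters: `θ v` is `v` mapped by `f` and
reversed, so `θ u` is always a permutation of `u.map f`. A pseudo-power `u₁ ⋯ uₖ` using only `u`
is an ordinary power; if both `u` and `θ u` occur, each letter `b` of `u` and its image `f b`
lie in `S`, where `b ≤ f b ≤ f (f b) = b` forces `f b = b`, so `θ u` is the reversal of `u`.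
Either way all blocks are permutations of one another, i.e. the pseudo-power is an abelian power.
-/

namespace List

variable {α : Type*}

theorem antimorphism_nil {θ : List α → List α} (hanti : ∀ u v, θ (u ++ v) = θ v ++ θ u) :
    θ [] = [] := by
  have h := congrArg length (hanti [] [])
  simp only [append_nil, length_append] at h
  exact eq_nil_of_length_eq_zero (by omega)

theorem antimorphism_eq_reverse_map {θ : List α → List α}
    (hanti : ∀ u v, θ (u ++ v) = θ v ++ θ u) {f : α → α} (hf : ∀ a, θ [a] = [f a]) (v : List α) :
    θ v = (v.map f).reverse := by
  induction v with
  | nil => simpa using antimorphism_nil hanti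
  | cons a t ih => rw [← singleton_append, hanti, hf, ih]; simp

theorem involutive_of_antimorphism {θ : List α → List α} (hinv : ∀ w, θ (θ w) = w)
    {f : α → α} (hf : ∀ a, θ [a] = [f a]) : Function.Involutive f := fun a => by
  simpa [hf] using hinv [a]

theorem reverse_map_perm_of_forall_fixed {f : α → α} {u : List α} (hfix : ∀ b ∈ u, f b = b) :
    (u.map f).reverse.Perm u := by
  rw [map_congr_left hfix, map_id']
  exact reverse_perm u

theorem perm_of_forall_eq_or_eq {us : List (List α)} {u u' : List α}
    (h : ∀ v ∈ us, v = u ∨ v = u') (hperm : u ∈ us → u' ∈ us → u.Perm u') :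
    ∀ v₁ ∈ us, ∀ v₂ ∈ us, v₁.Perm v₂ := by
  intro v₁ h₁ v₂ h₂
  rcases h v₁ h₁ with rfl | rfl <;> rcases h v₂ h₂ with rfl | rfl
  · rfl
  · exact hperm h₁ h₂
  · exact (hperm h₂ h₁).symm
  · rfl

theorem forall_mem_of_eq_map_range {w : ℕ → α} {S : Set α} (hw : ∀ n, w n ∈ S) {l : List α}
    {i n : ℕ} (hl : l = (range n).map fun j => w (i + j)) : ∀ a ∈ l, a ∈ S := by
  subst hl
  simp only [mem_map]
  rintro _ ⟨j, -, rfl⟩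
  exact hw _

end List

theorem Function.Involutive.eq_self_of_mem {α : Type*} [PartialOrder α] {f : α → α}
    (hf : Function.Involutive f) {S : Set α} (hS : ∀ a ∈ S, a ≤ f a) {a : α} (ha : a ∈ S)
    (hfa : f a ∈ S) : f a = a :=
  le_antisymm ((hS (f a) hfa).trans_eq (hf a)) (hS a ha)

open List in
theorem abelianPowerFree_implies_pseudoPowerFree_general {α : Type*} [LinearOrder α]
    [DecidableEq α]
    (θ : List α → List α)
    (hanti : ∀ u v : List α, θ (u ++ v) = θ v ++ θ u)
    (hinv : ∀ w : List α, θ (θ w) = w)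
    (f : α → α) (hf : ∀ a : α, θ [a] = [f a])
    (S : Set α) (hS : ∀ a ∈ S, a ≤ f a)
    (k : ℕ)
    (w : ℕ → α) (hw : ∀ n, w n ∈ S)
    (hfree : ∀ (i : ℕ) (us : List (List α)), us.length = k →
      (∀ v ∈ us, v ≠ []) →
      (∀ v₁ ∈ us, ∀ v₂ ∈ us, ∀ a : α, v₁.count a = v₂.count a) →
      us.flatten ≠ (List.range us.flatten.length).map fun j => w (i + j)) :
    ¬ ∃ (i : ℕ) (us : List (List α)) (u : List α), us.length = k ∧ u ≠ [] ∧
        (∀ v ∈ us, v = u ∨ v = θ u) ∧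
        us.flatten = (List.range us.flatten.length).map fun j => w (i + j) := by
  rintro ⟨i, us, u, hlen, hu, hvs, heq⟩
  have hθ := antimorphism_eq_reverse_map hanti hf
  have hmem := forall_mem_of_eq_map_range hw heq
  have hperm : u ∈ us → θ u ∈ us → u.Perm (θ u) := fun h₁ h₂ => by
    rw [hθ]
    refine (reverse_map_perm_of_forall_fixed fun b hb => ?_).symm
    refine (involutive_of_antimorphism hinv hf).eq_self_of_mem hS
      (hmem b (mem_flatten_of_mem h₁ hb)) (hmem _ (mem_flatten_of_mem h₂ ?_))
    rw [hθ]
    exact mem_reverse.mpr (mem_map_of_mem hb)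
  refine hfree i us hlen (fun v hv => ?_) (fun v₁ h₁ v₂ h₂ a => ?_) heq
  · rcases hvs v hv with rfl | rfl
    · exact hu
    · simpa [hθ] using hu
  · exact (perm_of_forall_eq_or_eq hvs hperm v₁ h₁ v₂ h₂).count_eq a

/-- If `S ⊆ Idt(θ) ∪ Trn(θ)` and the infinite word `w` over `S` is
abelian-`k`th-power-free, then `w` is pseudo-`k`th-power-free w.r.t. `θ`. -/
theorem abelianPowerFree_implies_pseudoPowerFree {α : Type*} [LinearOrder α]
    [DecidableEq α]
    (θ : List α → List α)
    (hanti : ∀ u v : List α, θ (u ++ v) = θ v ++ θ u)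
    (hinv : ∀ w : List α, θ (θ w) = w)
    (f : α → α) (hf : ∀ a : α, θ [a] = [f a])
    (S : Set α) (hS : ∀ a ∈ S, a ≤ f a)
    (k : ℕ) (hk : 2 ≤ k)
    (w : ℕ → α) (hw : ∀ n, w n ∈ S)
    (hfree : ∀ (i : ℕ) (us : List (List α)), us.length = k →
      (∀ v ∈ us, v ≠ []) →
      (∀ v₁ ∈ us, ∀ v₂ ∈ us, ∀ a : α, v₁.count a = v₂.count a) →
      us.flatten ≠ (List.range us.flatten.length).map fun j => w (i + j)) :
    ¬ ∃ (i : ℕ) (us : List (List α)) (u : List α), us.length = k ∧ u ≠ [] ∧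
        (∀ v ∈ us, v = u ∨ v = θ u) ∧
        us.flatten = (List.range us.flatten.length).map fun j => w (i + j) :=
  abelianPowerFree_implies_pseudoPowerFree_general θ hanti hinv f hf S hS k w hw hfree
end

section
/- There is no pseudo-square-free infinite word over the 3-letter alphabet {0,1,2} with respect to the antimorphic involution θ = (0,1)·Mir (i.e., θ swaps 0 and 1, fixes 2, and reverses words). Equivalently, every word over {0,1,2} of length at least 8 contains a pseudo-square with respect to θ. -/
/-!
Having a pseudo-square is inherited by superwords, so the pseudo-square-free words over a
finite alphabet form a tree under extension by one letter on the right. Growing this tree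
level by level for `θ = (0,1)·Mir` over `{0,1,2}` (`pseudoSquareFreeWords`), it has no node at
depth 8.
-/

variable {α : Type*}

def HasPseudoSquare (θ : List α → List α) (w : List α) : Prop :=
  ∃ u : List α, u ≠ [] ∧ (u ++ u <:+: w ∨ u ++ θ u <:+: w)

namespace HasPseudoSquare

variable {θ : List α → List α} {v w : List α}

theorem mono (h : HasPseudoSquare θ v) (hvw : v <:+: w) : HasPseudoSquare θ w :=
  let ⟨u, hu, hsq⟩ := h
  ⟨u, hu, hsq.imp (·.trans hvw) (·.trans hvw)⟩

theorem iff_exists_mem_tails_inits :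
    HasPseudoSquare θ w ↔
      ∃ t ∈ w.tails, ∃ u ∈ t.inits, u ≠ [] ∧ (u ++ u <+: t ∨ u ++ θ u <+: t) := by
  simp only [List.mem_tails, List.mem_inits]
  constructor
  · rintro ⟨u, hu, hsq | hsq⟩
    · obtain ⟨t, hpre, hsuf⟩ := List.infix_iff_prefix_suffix.mp hsq
      exact ⟨t, hsuf, u, (List.prefix_append u u).trans hpre, hu, .inl hpre⟩
    · obtain ⟨t, hpre, hsuf⟩ := List.infix_iff_prefix_suffix.mp hsq
      exact ⟨t, hsuf, u, (List.prefix_append u (θ u)).trans hpre, hu, .inr hpre⟩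
  · rintro ⟨t, hsuf, u, -, hu, hsq⟩
    exact ⟨u, hu, hsq.imp (fun h => List.infix_iff_prefix_suffix.mpr ⟨t, h, hsuf⟩)
      (fun h => List.infix_iff_prefix_suffix.mpr ⟨t, h, hsuf⟩)⟩

instance [DecidableEq α] : DecidablePred (HasPseudoSquare θ) := fun _ =>
  decidable_of_iff _ iff_exists_mem_tails_inits.symm

end HasPseudoSquare

section PseudoSquareFreeWords

variable [DecidableEq α] (θ : List α → List α) (A : List α)

def pseudoSquareFreeWords : ℕ → List (List α)
  | 0 => [[]]
  | n + 1 => ((pseudoSquareFreeWords n).flatMap fun w => A.map (w ++ [·])).filter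
      fun w => !decide (HasPseudoSquare θ w)

variable {θ A}

theorem mem_pseudoSquareFreeWords {w : List α} (hA : ∀ a ∈ w, a ∈ A)
    (hw : ¬HasPseudoSquare θ w) : w ∈ pseudoSquareFreeWords θ A w.length := by
  induction w using List.reverseRecOn with
  | nil => simp [pseudoSquareFreeWords]
  | append_singleton v a ih =>
    have hv : ¬HasPseudoSquare θ v := fun h => hw (h.mono (List.prefix_append v [a]).isInfix)
    simp only [List.length_append, List.length_singleton, pseudoSquareFreeWords, List.mem_filter,
      List.mem_flatMap, List.mem_map, hw, decide_false, Bool.not_false, and_true]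
    exact ⟨v, ih (fun b hb => hA b (List.mem_append_left _ hb)) hv, a,
      hA a (List.mem_append_right _ (List.mem_singleton_self a)), rfl⟩

theorem hasPseudoSquare_of_pseudoSquareFreeWords_eq_nil {n : ℕ}
    (h : pseudoSquareFreeWords θ A n = []) {w : List α} (hA : ∀ a ∈ w, a ∈ A)
    (hn : n ≤ w.length) : HasPseudoSquare θ w := by
  by_contra hw
  have hpre : ¬HasPseudoSquare θ (w.take n) := fun h => hw (h.mono (w.take_prefix n).isInfix)
  have hmem := mem_pseudoSquareFreeWords (fun a ha => hA a (List.mem_of_mem_take ha)) hpre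
  rw [List.length_take_of_le hn, h] at hmem
  exact List.not_mem_nil hmem

end PseudoSquareFreeWords

def swap01Mirror (v : List (Fin 3)) : List (Fin 3) := (v.map ![1, 0, 2]).reverse

theorem pseudoSquareFreeWords_swap01Mirror_eight :
    pseudoSquareFreeWords swap01Mirror (List.finRange 3) 8 = [] := by
  decide

/-- Every word over `{0,1,2}` of length at least 8 contains a pseudo-square
with respect to `θ = (0,1)·Mir`. -/
theorem no_pseudoSquareFree_word_three_letters_transposition
    (f : Fin 3 → Fin 3) (hf0 : f 0 = 1) (hf1 : f 1 = 0) (hf2 : f 2 = 2)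
    (θ : List (Fin 3) → List (Fin 3)) (hθ : ∀ v, θ v = (v.map f).reverse)
    (w : List (Fin 3)) (hw : 8 ≤ w.length) :
    ∃ u : List (Fin 3), u ≠ [] ∧ ((u ++ u) <:+: w ∨ (u ++ θ u) <:+: w) := by
  have hf : f = ![1, 0, 2] := by
    funext x
    fin_cases x <;> simp [hf0, hf1, hf2]
  obtain rfl : θ = swap01Mirror := by
    funext v
    rw [hθ, hf, swap01Mirror]
  exact hasPseudoSquare_of_pseudoSquareFreeWords_eq_nil pseudoSquareFreeWords_swap01Mirror_eight
    (fun a _ => List.mem_finRange a) hw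
end

section
/- Every word over the binary alphabet {0,1} of length at least 10 contains a pseudo-cube with respect to the mirror image. Equivalently, there is no pseudo-cube-free infinite word over {0,1} w.r.t. Mir. -/
/-!
Every binary word of length ten is checked by exhaustive search, and a longer word has one of
them as a prefix. The search is cheap because the root of a pseudo-cube `x` is forced to be
`x.take (x.length / 3)`, so testing whether `x` is a pseudo-cube takes four comparisons.
-/

namespace List

variable {α : Type*}

def IsMirrorPseudoCube (x : List α) : Prop :=
  ∃ u u₁ u₂ u₃ : List α, u ≠ [] ∧ (u₁ = u ∨ u₁ = u.reverse) ∧ (u₂ = u ∨ u₂ = u.reverse) ∧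
    (u₃ = u ∨ u₃ = u.reverse) ∧ x = u₁ ++ u₂ ++ u₃

theorem isMirrorPseudoCube_iff_take {x : List α} :
    IsMirrorPseudoCube x ↔
      let u := x.take (x.length / 3)
      u ≠ [] ∧ ∃ v ∈ [u, u.reverse], ∃ v' ∈ [u, u.reverse], x = u ++ v ++ v' := by
  constructor
  · rintro ⟨u, u₁, u₂, u₃, hu, h₁, h₂, h₃, rfl⟩
    have hlen : ∀ v, (v = u ∨ v = u.reverse) → v.length = u.length := by
      rintro v (rfl | rfl) <;> simp
    have hroot : (u₁ ++ u₂ ++ u₃).take ((u₁ ++ u₂ ++ u₃).length / 3) = u₁ := by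
      rw [append_assoc, take_left' (by simp [hlen _ h₁, hlen _ h₂, hlen _ h₃]; omega)]
    have hmem : ∀ v, (v = u ∨ v = u.reverse) → v ∈ [u₁, u₁.reverse] := by
      rintro v (rfl | rfl) <;> rcases h₁ with rfl | rfl <;> simp
    simp only [hroot]
    refine ⟨?_, u₂, hmem u₂ h₂, u₃, hmem u₃ h₃, rfl⟩
    rcases h₁ with rfl | rfl <;> simpa
  · rintro ⟨hu, v, hv, v', hv', hx⟩
    simp only [mem_cons, not_mem_nil, or_false] at hv hv'
    exact ⟨_, _, v, v', hu, Or.inl rfl, hv, hv', hx⟩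

instance [DecidableEq α] : DecidablePred (IsMirrorPseudoCube (α := α)) := fun _ =>
  decidable_of_iff _ isMirrorPseudoCube_iff_take.symm

theorem exists_infix_iff_exists_mem_tails_inits {w : List α} {p : List α → Prop} :
    (∃ x, x <:+: w ∧ p x) ↔ ∃ t ∈ w.tails, ∃ x ∈ t.inits, p x := by
  simp only [mem_tails, mem_inits, infix_iff_prefix_suffix]
  grind

def ContainsMirrorPseudoCube (w : List α) : Prop :=
  ∃ x, x <:+: w ∧ IsMirrorPseudoCube x

instance [DecidableEq α] : DecidablePred (ContainsMirrorPseudoCube (α := α)) := fun _ =>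
  decidable_of_iff _ exists_infix_iff_exists_mem_tails_inits.symm

theorem ContainsMirrorPseudoCube.mono {v w : List α} (h : ContainsMirrorPseudoCube v)
    (hvw : v <:+: w) : ContainsMirrorPseudoCube w :=
  let ⟨x, hxv, hx⟩ := h
  ⟨x, hxv.trans hvw, hx⟩

theorem mem_sections_replicate_length {s l : List α} (hl : ∀ a ∈ l, a ∈ s) :
    l ∈ (replicate l.length s).sections := by
  rw [mem_sections]
  induction l with
  | nil => exact Forall₂.nil
  | cons a l ih =>
    rw [forall_mem_cons] at hl
    exact Forall₂.cons hl.1 (ih hl.2)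

end List

open List

set_option maxRecDepth 10000 in
theorem containsMirrorPseudoCube_of_length_eq_ten {w : List Bool} (hw : w.length = 10) :
    ContainsMirrorPseudoCube w := by
  have hsearch : ∀ v ∈ (replicate 10 [false, true]).sections, ContainsMirrorPseudoCube v := by
    decide
  exact hsearch w (hw ▸ mem_sections_replicate_length (by simp))

/-- Every binary word of length at least 10 contains a pseudo-cube with respect
to the mirror image. -/
theorem binary_length_ten_contains_pseudoCube_mirror
    (w : List Bool) (hw : 10 ≤ w.length) :
    ∃ u u₁ u₂ u₃ : List Bool, u ≠ [] ∧
      (u₁ = u ∨ u₁ = u.reverse) ∧ (u₂ = u ∨ u₂ = u.reverse) ∧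
      (u₃ = u ∨ u₃ = u.reverse) ∧ (u₁ ++ u₂ ++ u₃) <:+: w := by
  have hprefix : ContainsMirrorPseudoCube (w.take 10) :=
    containsMirrorPseudoCube_of_length_eq_ten (by simpa using hw)
  obtain ⟨_, hinfix, u, u₁, u₂, u₃, hu, h₁, h₂, h₃, rfl⟩ :=
    hprefix.mono (w.take_prefix 10).isInfix
  exact ⟨u, u₁, u₂, u₃, hu, h₁, h₂, h₃, hinfix⟩
end

section
/- Let z be the infinite word over {0,1,2} obtained from the Thue–Morse sequence by inserting the letter 2 between every two consecutive letters (z = t₀ 2 t₁ 2 t₂ 2 ⋯ where t is the Thue–Morse sequence). Then z is pseudo-cube-free with respect to the antimorphic involution θ = (0,1)·Mir. -/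
/-! In `z` the letter `2` occupies exactly the odd positions, and `θ` fixes `2` while swapping
`0` and `1`. Since `θ v` begins with the image of the last letter of `v`, a factor `v` of `z` is
never immediately followed by `θ v`: that would put two `2`s, or two non-`2`s, side by side.
So the three blocks of a pseudo-cube in `z` coincide, and it is an ordinary cube. A cube of odd
period puts a `2` opposite a non-`2`; a cube of even period `2s`, read at the even positions,
contains an overlap of period `s` in the Thue–Morse word `t`, and `t` is overlap-free. An overlap
of even period halves, as `t (2n + r) = t n xor r`. An overlap of odd period `p` forces `t` to
alternate along `t m, …, t (m + p)` (it does at even positions, and the period carries this to the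
odd ones), which contradicts `t m = t (m + p)`. -/

def HasPeriodOn {α : Type*} (x : ℕ → α) (p i n : ℕ) : Prop :=
  ∀ k, i ≤ k → k < i + n → x (k + p) = x k

section Factor

variable {α : Type*} (x : ℕ → α)

def factor (i n : ℕ) : List α := (List.range n).map fun j => x (i + j)

@[simp] lemma length_factor (i n : ℕ) : (factor x i n).length = n := by simp [factor]

lemma factor_add (i a b : ℕ) : factor x i (a + b) = factor x i a ++ factor x (i + a) b := by
  simp [factor, List.range_add, add_assoc]

lemma factor_eq_factor_iff {i j n : ℕ} :
    factor x i n = factor x j n ↔ ∀ k < n, x (i + k) = x (j + k) := by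
  simp [factor]

lemma hasPeriodOn_iff_factor_eq {p i n : ℕ} :
    HasPeriodOn x p i n ↔ factor x (i + p) n = factor x i n := by
  rw [factor_eq_factor_iff]
  refine ⟨fun h k hk => by simpa [add_right_comm] using h (i + k) (by omega) (by omega),
    fun h k hik hk => ?_⟩
  obtain ⟨k, rfl⟩ := Nat.exists_eq_add_of_le hik
  simpa [add_right_comm] using h k (by omega)

lemma head?_factor (i k : ℕ) : (factor x i (k + 1)).head? = some (x i) := by
  simp [factor, List.range_succ_eq_map]

lemma getLast?_factor (i k : ℕ) : (factor x i (k + 1)).getLast? = some (x (i + k)) := by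
  simp [factor, List.range_succ]

lemma factor_add_ne_reverse_map {f : α → α} (hxf : ∀ n, x (n + 1) ≠ f (x n)) {ℓ : ℕ}
    (hℓ : ℓ ≠ 0) (i : ℕ) : factor x (i + ℓ) ℓ ≠ ((factor x i ℓ).map f).reverse := by
  obtain ⟨k, rfl⟩ := Nat.exists_eq_add_one_of_ne_zero hℓ
  intro h
  have hhead := congrArg List.head? h
  rw [head?_factor, List.head?_reverse, List.getLast?_map, getLast?_factor, Option.map_some,
    Option.some_inj, ← add_assoc] at hhead
  exact hxf _ hhead

end Factor

lemma Function.Involutive.eq_or_eq_apply {β : Type*} {g : β → β} (hg : Function.Involutive g)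
    {u v w : β} (hv : v = u ∨ v = g u) (hw : w = u ∨ w = g u) : w = v ∨ w = g v := by
  rcases hv with rfl | rfl <;> rcases hw with rfl | rfl <;> simp [hg _]

theorem pseudoCube_ne_factor {α : Type*} {x : ℕ → α} {f : α → α} (hf : Function.Involutive f)
    (hxf : ∀ n, x (n + 1) ≠ f (x n)) (hx : ∀ i p, 0 < p → ¬ HasPeriodOn x p i (2 * p))
    {u u₁ u₂ u₃ : List α} (hu : u ≠ []) (h₁ : u₁ = u ∨ u₁ = (u.map f).reverse)
    (h₂ : u₂ = u ∨ u₂ = (u.map f).reverse) (h₃ : u₃ = u ∨ u₃ = (u.map f).reverse) (i : ℕ) :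
    u₁ ++ u₂ ++ u₃ ≠ factor x i (u₁ ++ u₂ ++ u₃).length := by
  set θ : List α → List α := fun v => (v.map f).reverse
  have hθ : Function.Involutive θ := fun v => by simp [θ, List.map_reverse, hf.comp_self]
  have hlen : ∀ {v}, v = u ∨ v = θ u → v.length = u.length := by
    rintro v (rfl | rfl) <;> simp [θ]
  set ℓ := u.length
  have hℓ : ℓ ≠ 0 := by simpa [ℓ] using hu
  intro hz
  rw [List.length_append, List.length_append, hlen h₁, hlen h₂, hlen h₃, factor_add, factor_add,
    ← add_assoc] at hz
  obtain ⟨hz₁₂, rfl⟩ := List.append_inj hz (by simp [hlen h₁, hlen h₂])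
  obtain ⟨rfl, rfl⟩ := List.append_inj hz₁₂ (by simp [hlen h₁])
  have h₁₂ : factor x (i + ℓ) ℓ = factor x i ℓ :=
    (hθ.eq_or_eq_apply h₁ h₂).resolve_right (factor_add_ne_reverse_map x hxf hℓ i)
  have h₂₃ : factor x (i + ℓ + ℓ) ℓ = factor x (i + ℓ) ℓ :=
    (hθ.eq_or_eq_apply h₂ h₃).resolve_right (factor_add_ne_reverse_map x hxf hℓ (i + ℓ))
  refine hx i ℓ (Nat.pos_of_ne_zero hℓ) ((hasPeriodOn_iff_factor_eq x).2 ?_)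
  rw [two_mul, factor_add, factor_add, h₂₃, h₁₂]

lemma Bool.apply_add_eq_xor_of_alternating {x : ℕ → Bool} {m : ℕ} :
    ∀ {p : ℕ}, (∀ k < p, x (m + k + 1) = !x (m + k)) → x (m + p) = (x m ^^ decide (Odd p))
  | 0, _ => by simp
  | p + 1, h => by
    rw [← add_assoc, h p p.lt_succ_self,
      apply_add_eq_xor_of_alternating fun k hk => h k (by omega)]
    by_cases hp : Odd p <;> simp [hp, Nat.odd_add_one]

def thueMorse (n : ℕ) : Bool := (Nat.digits 2 n).count 1 % 2 = 1

lemma thueMorse_two_mul (n : ℕ) : thueMorse (2 * n) = thueMorse n := by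
  rcases Nat.eq_zero_or_pos n with rfl | hn
  · rfl
  · simp [thueMorse, Nat.digits_def' one_lt_two (by omega : 0 < 2 * n)]

lemma thueMorse_two_mul_add_one (n : ℕ) : thueMorse (2 * n + 1) = !thueMorse n := by
  have hdiv : (2 * n + 1) / 2 = n := by omega
  have hmod : (2 * n + 1) % 2 = 1 := by omega
  simp only [thueMorse, Nat.digits_def' one_lt_two (Nat.succ_pos _), hdiv, hmod,
    List.count_cons_self]
  rcases Nat.mod_two_eq_zero_or_one ((Nat.digits 2 n).count 1) with h | h <;>
    simp [h, Nat.add_mod]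

lemma thueMorse_two_mul_add_one_eq_not (n : ℕ) :
    thueMorse (2 * n + 1) = !thueMorse (2 * n) := by
  rw [thueMorse_two_mul, thueMorse_two_mul_add_one]

lemma thueMorse_eq_of_two_mul_add_eq {a b r : ℕ} (hr : r < 2)
    (h : thueMorse (2 * a + r) = thueMorse (2 * b + r)) : thueMorse a = thueMorse b := by
  interval_cases r
  · simpa [thueMorse_two_mul] using h
  · simpa [thueMorse_two_mul_add_one] using h

lemma HasPeriodOn.thueMorse_half {q m : ℕ}
    (h : HasPeriodOn thueMorse (2 * q) m (2 * q + 1)) :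
    HasPeriodOn thueMorse q (m / 2) (q + 1) := by
  intro k hk hk'
  apply thueMorse_eq_of_two_mul_add_eq (Nat.mod_lt m two_pos)
  convert h (2 * k + m % 2) (by omega) (by omega) using 2
  omega

lemma HasPeriodOn.thueMorse_succ_eq_not {p m : ℕ} (h : HasPeriodOn thueMorse p m (p + 1))
    (hp : Odd p) {n : ℕ} (hmn : m ≤ n) (hn : n < m + p) :
    thueMorse (n + 1) = !thueMorse n := by
  obtain ⟨a, rfl | rfl⟩ := Nat.even_or_odd' n
  · exact thueMorse_two_mul_add_one_eq_not a
  · have hshift : thueMorse (2 * a + 1 + p + 1) = !thueMorse (2 * a + 1 + p) := by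
      obtain ⟨c, rfl⟩ := hp
      rw [show 2 * a + 1 + (2 * c + 1) = 2 * (a + c + 1) by ring,
        thueMorse_two_mul_add_one_eq_not]
    rwa [h _ hmn (by omega), add_right_comm, h _ (by omega) (by omega)] at hshift

lemma not_hasPeriodOn_thueMorse_of_odd {p : ℕ} (hp : Odd p) (m : ℕ) :
    ¬ HasPeriodOn thueMorse p m (p + 1) := fun h => by
  have halt := Bool.apply_add_eq_xor_of_alternating (x := thueMorse) (m := m) (p := p)
    fun k hk => h.thueMorse_succ_eq_not hp (by omega) (by omega)
  rw [h m le_rfl (by omega), decide_eq_true hp] at halt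
  simp at halt

theorem not_hasPeriodOn_thueMorse {p : ℕ} (hp : 0 < p) (m : ℕ) :
    ¬ HasPeriodOn thueMorse p m (p + 1) := by
  induction p using Nat.strong_induction_on generalizing m with
  | _ p ih =>
    obtain ⟨q, rfl | rfl⟩ := Nat.even_or_odd' p
    · exact fun h => ih q (by omega) (by omega) (m / 2) h.thueMorse_half
    · exact not_hasPeriodOn_thueMorse_of_odd (odd_two_mul_add_one q) m

def thueMorseTwos (n : ℕ) : Fin 3 :=
  if n % 2 = 1 then 2 else if thueMorse (n / 2) then 1 else 0

lemma eq_thueMorseTwos {z : ℕ → Fin 3}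
    (hzeven : ∀ n : ℕ, z (2 * n) = if (Nat.digits 2 n).count 1 % 2 = 1 then 1 else 0)
    (hzodd : ∀ n : ℕ, z (2 * n + 1) = 2) : z = thueMorseTwos := by
  funext n
  obtain ⟨a, rfl | rfl⟩ := Nat.even_or_odd' n
  · simp [thueMorseTwos, hzeven, thueMorse]
  · simp [thueMorseTwos, hzodd]

lemma thueMorseTwos_eq_two_iff (n : ℕ) : thueMorseTwos n = 2 ↔ n % 2 = 1 := by
  unfold thueMorseTwos
  split_ifs <;> simp_all

lemma thueMorseTwos_two_mul_eq_iff (a b : ℕ) :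
    thueMorseTwos (2 * a) = thueMorseTwos (2 * b) ↔ thueMorse a = thueMorse b := by
  simp only [thueMorseTwos, Nat.mul_mod_right, Nat.mul_div_cancel_left _ two_pos]
  cases thueMorse a <;> cases thueMorse b <;> decide

lemma thueMorseTwos_add_odd_ne {f : Fin 3 → Fin 3} (hf : ∀ y, f y = 2 ↔ y = 2) {p : ℕ}
    (hp : Odd p) (n : ℕ) : thueMorseTwos (n + p) ≠ f (thueMorseTwos n) := by
  intro h
  have h2 := congrArg (· = 2) h
  simp only [hf, thueMorseTwos_eq_two_iff, eq_iff_iff] at h2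
  obtain ⟨c, rfl⟩ := hp
  omega

theorem not_hasPeriodOn_thueMorseTwos {p : ℕ} (hp : 0 < p) (i : ℕ) :
    ¬ HasPeriodOn thueMorseTwos p i (2 * p) := by
  intro h
  obtain ⟨s, rfl | rfl⟩ := Nat.even_or_odd' p
  · refine not_hasPeriodOn_thueMorse (p := s) (by omega) ((i + 1) / 2) fun k hk hk' => ?_
    rw [← thueMorseTwos_two_mul_eq_iff, mul_add]
    exact h (2 * k) (by omega) (by omega)
  · exact thueMorseTwos_add_odd_ne (fun _ => Iff.rfl) (odd_two_mul_add_one s) i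
      (h i le_rfl (by omega))

/-- The infinite word obtained from the Thue–Morse sequence by inserting the
letter `2` between consecutive letters is pseudo-cube-free with respect to
`θ = (0,1)·Mir` over `{0,1,2}`. -/
theorem thueMorse_with_twos_pseudoCubeFree
    (f : Fin 3 → Fin 3) (hf0 : f 0 = 1) (hf1 : f 1 = 0) (hf2 : f 2 = 2)
    (θ : List (Fin 3) → List (Fin 3)) (hθ : ∀ v, θ v = (v.map f).reverse)
    (z : ℕ → Fin 3)
    (hzeven : ∀ n : ℕ, z (2 * n) =
      if (Nat.digits 2 n).count 1 % 2 = 1 then 1 else 0)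
    (hzodd : ∀ n : ℕ, z (2 * n + 1) = 2) :
    ¬ ∃ (i : ℕ) (u u₁ u₂ u₃ : List (Fin 3)), u ≠ [] ∧
        (u₁ = u ∨ u₁ = θ u) ∧ (u₂ = u ∨ u₂ = θ u) ∧ (u₃ = u ∨ u₃ = θ u) ∧
        (u₁ ++ u₂ ++ u₃) =
          (List.range (u₁ ++ u₂ ++ u₃).length).map fun j => z (i + j) := by
  rintro ⟨i, u, u₁, u₂, u₃, hu, h₁, h₂, h₃, hz⟩
  obtain rfl : θ = fun v => (v.map f).reverse := funext hθ
  obtain rfl := eq_thueMorseTwos hzeven hzodd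
  have hf : Function.Involutive f := by
    intro y; fin_cases y <;> simp [hf0, hf1, hf2]
  have hf_two : ∀ y, f y = 2 ↔ y = 2 := by
    intro y; fin_cases y <;> simp [hf0, hf1, hf2]
  exact pseudoCube_ne_factor hf (thueMorseTwos_add_odd_ne hf_two odd_one)
    (fun i p hp => not_hasPeriodOn_thueMorseTwos hp i) hu h₁ h₂ h₃ i hz
end

section
/- Let φ be an antimorphic involution over a 4-letter alphabet {a,b,c,d} with φ(a)=b and φ(c)=d (so Trn(φ)=2). An infinite word w over {a,b,c,d} is pseudo-square-free with respect to φ if and only if w is square-free and w ∈ ((a+b)(c+d))^ω ∪ ((c+d)(a+b))^ω, i.e., the letters of w alternate between the sets {a,b} and {c,d}. -/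
/-!
Call `{a, b}` and `{c, d}` the two blocks. Two letters lie in the same block exactly when the
second is the first or its image under `φ`, so a word avoids the pseudo-squares `xx` and `xφ(x)`
of length two precisely when consecutive letters change block, i.e. when it alternates. Conversely
a pseudo-square `uφ(u)` has the adjacent letters `x φ(x)` at its centre, `x` the last letter of `u`,
and these lie in the same block; so an alternating square-free word is pseudo-square-free.
-/

def IsFactorAt {α : Type*} (w : ℕ → α) (i : ℕ) (v : List α) : Prop :=
  v = (List.range v.length).map fun j => w (i + j)

section Factors

variable {α : Type*} {w : ℕ → α} {i : ℕ} {v : List α}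

theorem isFactorAt_pair (w : ℕ → α) (i : ℕ) : IsFactorAt w i [w i, w (i + 1)] := by
  simp [IsFactorAt, List.range_succ]

theorem IsFactorAt.getElem (h : IsFactorAt w i v) (k : ℕ) (hk : k < v.length) :
    v[k] = w (i + k) := by
  rw [List.getElem_of_eq h hk]
  simp

theorem IsFactorAt.exists_apply_succ_eq_of_append_reverse_map {f : α → α} {u : List α}
    (hu : u ≠ []) (h : IsFactorAt w i (u ++ (u.map f).reverse)) :
    ∃ j, w (j + 1) = f (w j) := by
  have hpos : 0 < u.length := List.length_pos_iff.mpr hu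
  have hlen : (u ++ (u.map f).reverse).length = u.length + u.length := by simp
  refine ⟨i + (u.length - 1), ?_⟩
  have hlast := h.getElem (u.length - 1) (by omega)
  have hfirst := h.getElem u.length (by omega)
  rw [List.getElem_append_left (by omega)] at hlast
  rw [List.getElem_append_right (by omega), List.getElem_reverse, List.getElem_map] at hfirst
  rw [show i + (u.length - 1) + 1 = i + u.length by omega, ← hfirst, ← hlast]
  congr 2
  simp

end Factors

theorem forall_not_mem_iff_mem_succ_iff {α : Type*} (s : Set α) (w : ℕ → α) :
    (∀ i, ¬(w i ∈ s ↔ w (i + 1) ∈ s)) ↔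
      (∀ n, w (2 * n) ∈ s ∧ w (2 * n + 1) ∉ s) ∨ (∀ n, w (2 * n) ∉ s ∧ w (2 * n + 1) ∈ s) := by
  constructor
  · intro h
    have parity : ∀ i, w i ∈ s ↔ (w 0 ∈ s ↔ Even i) := by
      intro i
      induction i with
      | zero => simp
      | succ i ih => have := h i; rw [Nat.even_add_one]; tauto
    by_cases h0 : w 0 ∈ s
    · left
      intro n
      simp [parity (2 * n), parity (2 * n + 1), h0]
    · right
      intro n
      simp [parity (2 * n), parity (2 * n + 1), h0]
  · intro h i
    obtain ⟨n, rfl | rfl⟩ := Nat.even_or_odd' i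
    · rcases h with h | h <;> have := h n <;> tauto
    · rw [show 2 * n + 1 + 1 = 2 * (n + 1) by ring]
      rcases h with h | h <;> have := h n <;> have := h (n + 1) <;> tauto

theorem Fin4.mem_23_iff_not_mem_01 (x : Fin 4) :
    x ∈ ({2, 3} : Set (Fin 4)) ↔ x ∉ ({0, 1} : Set (Fin 4)) := by
  fin_cases x <;> simp

theorem Fin4.mem_01_iff_mem_01_iff {f : Fin 4 → Fin 4}
    (hf0 : f 0 = 1) (hf1 : f 1 = 0) (hf2 : f 2 = 3) (hf3 : f 3 = 2) (x y : Fin 4) :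
    (x ∈ ({0, 1} : Set (Fin 4)) ↔ y ∈ ({0, 1} : Set (Fin 4))) ↔ y = x ∨ y = f x := by
  fin_cases x <;> fin_cases y <;> simp [hf0, hf1, hf2, hf3]

/-- Over the 4-letter alphabet `{a,b,c,d} = {0,1,2,3}` with `φ(0)=1, φ(2)=3`,
an infinite word is pseudo-square-free w.r.t. `φ` iff it is square-free and its
letters alternate between `{0,1}` and `{2,3}`. -/
theorem pseudoSquareFree_four_letters_iff
    (f : Fin 4 → Fin 4) (hf0 : f 0 = 1) (hf1 : f 1 = 0) (hf2 : f 2 = 3) (hf3 : f 3 = 2)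
    (φ : List (Fin 4) → List (Fin 4)) (hφ : ∀ v, φ v = (v.map f).reverse)
    (w : ℕ → Fin 4) :
    (¬ ∃ (i : ℕ) (u : List (Fin 4)), u ≠ [] ∧
        ((u ++ u) = (List.range (u ++ u).length).map (fun j => w (i + j)) ∨
         (u ++ φ u) = (List.range (u ++ φ u).length).map fun j => w (i + j))) ↔
    ((¬ ∃ (i : ℕ) (u : List (Fin 4)), u ≠ [] ∧
        (u ++ u) = (List.range (u ++ u).length).map fun j => w (i + j)) ∧
      ((∀ n : ℕ, w (2 * n) ∈ ({0, 1} : Set (Fin 4)) ∧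
          w (2 * n + 1) ∈ ({2, 3} : Set (Fin 4))) ∨
       (∀ n : ℕ, w (2 * n) ∈ ({2, 3} : Set (Fin 4)) ∧
          w (2 * n + 1) ∈ ({0, 1} : Set (Fin 4))))) := by
  obtain rfl : φ = fun v => (v.map f).reverse := funext hφ
  have sameBlock := Fin4.mem_01_iff_mem_01_iff hf0 hf1 hf2 hf3
  simp only [Fin4.mem_23_iff_not_mem_01, ← forall_not_mem_iff_mem_succ_iff]
  constructor
  · intro hfree
    refine ⟨fun ⟨i, u, hu, hsq⟩ => hfree ⟨i, u, hu, .inl hsq⟩, fun i hsame => ?_⟩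
    have hpair := isFactorAt_pair w i
    rcases (sameBlock (w i) (w (i + 1))).1 hsame with hsq | hpsq
    · rw [hsq] at hpair
      exact hfree ⟨i, [w i], List.cons_ne_nil _ _, .inl hpair⟩
    · rw [hpsq] at hpair
      exact hfree ⟨i, [w i], List.cons_ne_nil _ _, .inr hpair⟩
  · rintro ⟨hsqfree, halt⟩ ⟨i, u, hu, hsq | hpsq⟩
    · exact hsqfree ⟨i, u, hu, hsq⟩
    · obtain ⟨j, hj⟩ := IsFactorAt.exists_apply_succ_eq_of_append_reverse_map hu hpsq
      exact halt j ((sameBlock (w j) (w (j + 1))).2 (.inr hj))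
end
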